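/- arXiv:2306.08967 — 2 statements merged into one kernel-verified Lean document; each statement's English description precedes it below -/
import Mathlib

section
/- Let U₁ be an n₁×d matrix with orthonormal columns, Σ₁ a d×d matrix, V₁ an n₂×d matrix, and B a vector in R^{n₁} with (I − U₁U₁^T)B ≠ 0. Set W_B = U₁^T B, R_B = ‖(I − U₁U₁^T)B‖, and Q_B = (I − U₁U₁^T)B / R_B. Then the block matrix [U₁Σ₁V₁^T, B] (appending B as an extra column) equals [U₁, Q_B] · M · diag(V₁, 1)^T, where M is the (d+1)×(d+1) block upper-triangular matrix with blocks Σ₁ (top-left d×d), W_B (top-right d×1), 0 (bottom-left 1×d), and R_B (bottom-right 1×1). -/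
open Matrix

noncomputable def enorm {n : ℕ} (v : Fin n → ℝ) : ℝ :=
  Real.sqrt (∑ i, v i ^ 2)

/-- Append a column `b` to the matrix `M`. -/
def appendCol {n m : ℕ} (M : Matrix (Fin n) (Fin m) ℝ) (b : Fin n → ℝ) :
    Matrix (Fin n) (Fin (m + 1)) ℝ :=
  Matrix.of fun i j => if h : (j : ℕ) < m then M i ⟨j, h⟩ else b i

/-- Block-diagonal matrix `diag(V, 1)`. -/
def diagOne {n m : ℕ} (V : Matrix (Fin n) (Fin m) ℝ) :
    Matrix (Fin (n + 1)) (Fin (m + 1)) ℝ :=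
  Matrix.of fun i j =>
    if hi : (i : ℕ) < n then (if hj : (j : ℕ) < m then V ⟨i, hi⟩ ⟨j, hj⟩ else 0)
    else (if (j : ℕ) < m then 0 else 1)

lemma enorm_ne_zero_of_ne {n : ℕ} {v : Fin n → ℝ} (hv : v ≠ 0) : _root_.enorm v ≠ 0 := by
  unfold _root_.enorm
  rw [Real.sqrt_ne_zero']
  obtain ⟨i, hi⟩ := Function.ne_iff.mp hv
  exact Finset.sum_pos' (fun j _ => sq_nonneg _)
    ⟨i, Finset.mem_univ i, by simpa using pow_pos (abs_pos.mpr hi) 2 |>.trans_le (by rw [sq_abs])⟩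

theorem zha_simon_append_column {n₁ n₂ d : ℕ}
    (U₁ : Matrix (Fin n₁) (Fin d) ℝ) (hU : U₁ᵀ * U₁ = 1)
    (S₁ : Matrix (Fin d) (Fin d) ℝ) (V₁ : Matrix (Fin n₂) (Fin d) ℝ)
    (B : Fin n₁ → ℝ) (hB : (1 - U₁ * U₁ᵀ).mulVec B ≠ 0) :
    let WB := U₁ᵀ.mulVec B
    let RB := _root_.enorm ((1 - U₁ * U₁ᵀ).mulVec B)
    let QB := RB⁻¹ • (1 - U₁ * U₁ᵀ).mulVec B
    let M : Matrix (Fin (d + 1)) (Fin (d + 1)) ℝ :=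
      Matrix.of fun i j =>
        if hi : (i : ℕ) < d then
          (if hj : (j : ℕ) < d then S₁ ⟨i, hi⟩ ⟨j, hj⟩ else WB ⟨i, hi⟩)
        else (if (j : ℕ) < d then 0 else RB)
    appendCol (U₁ * S₁ * V₁ᵀ) B = appendCol U₁ QB * M * (diagOne V₁)ᵀ := by
  intro WB RB QB M
  have hRB : RB ≠ 0 := enorm_ne_zero_of_ne hB
  funext i j
  show (appendCol (U₁ * S₁ * V₁ᵀ) B) i j = ((appendCol U₁ QB * M) * (diagOne V₁)ᵀ) i j
  simp only [Matrix.mul_apply, transpose_apply, appendCol, diagOne, M, Matrix.of_apply]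
  rw [Fin.sum_univ_castSucc]
  simp only [Fin.sum_univ_castSucc, Fin.coe_castSucc, Fin.is_lt, dif_pos, Fin.val_last,
    lt_irrefl, dif_neg, Fin.eta, not_lt_of_gt]
  by_cases hj : (j : ℕ) < n₂
  · simp [hj, mul_zero, add_zero, zero_mul]
  · simp only [hj, dif_neg, not_false_iff, dite_false, dite_true, if_true, if_false,
      mul_zero, zero_mul, add_zero, zero_add, mul_one, Finset.sum_const_zero]
    have hQ : QB i * RB = ((1 - U₁ * U₁ᵀ) *ᵥ B) i := by
      simp only [QB, Pi.smul_apply, smul_eq_mul]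
      field_simp
    rw [hQ]
    have h1 : ∑ k, U₁ i k * WB k = ∑ k, ((U₁ * U₁ᵀ) i k) * B k := by
      simp only [WB, Matrix.mulVec, dotProduct, Matrix.mul_apply, transpose_apply,
        Finset.mul_sum, Finset.sum_mul]
      rw [Finset.sum_comm]
      exact Finset.sum_congr rfl fun k _ => Finset.sum_congr rfl fun l _ => by ring
    rw [h1]
    simp only [Matrix.mulVec, dotProduct, Matrix.sub_apply, Matrix.one_apply, sub_mul,
      Finset.sum_sub_distrib, ite_mul, one_mul, zero_mul, Finset.sum_ite_eq,
      Finset.mem_univ, if_true]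
    ring
end

section
/- Let A be an n×n matrix admitting a factorization A = U₁Σ₁V₁^T with U₁, V₁ having orthonormal columns, let B, C be vectors in R^n with (I − U₁U₁^T)B ≠ 0 and (I − V₁V₁^T)C ≠ 0. Define W_B = U₁^T B, W_C = V₁^T C, R_B = ‖(I − U₁U₁^T)B‖, R_C = ‖(I − V₁V₁^T)C‖, Q_B = (I − U₁U₁^T)B/R_B, Q_C = (I − V₁V₁^T)C/R_C. Then A + B C^T = [U₁, Q_B] · (diag(Σ₁, 0) + [W_B; R_B][W_C; R_C]^T) · [V₁, Q_C]^T, where diag(Σ₁,0) is the (d+1)×(d+1) matrix with Σ₁ in the top-left block and zeros elsewhere, and [W_B; R_B] denotes the (d+1)-vector obtained by appending R_B to W_B. -/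
open Matrix

lemma decomp {n d : ℕ} (U₁ : Matrix (Fin n) (Fin d) ℝ) (B : Fin n → ℝ)
    (hB : (1 - U₁ * U₁ᵀ).mulVec B ≠ 0) (i : Fin n) :
    (∑ k, U₁ i k * U₁ᵀ.mulVec B k) +
      (_root_.enorm ((1 - U₁ * U₁ᵀ).mulVec B))⁻¹ * ((1 - U₁ * U₁ᵀ).mulVec B) i *
        _root_.enorm ((1 - U₁ * U₁ᵀ).mulVec B) = B i := by
  have hR := enorm_ne_zero_of_ne hB
  have h1 : ((1 - U₁ * U₁ᵀ).mulVec B) i = B i - ∑ k, U₁ i k * U₁ᵀ.mulVec B k := by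
    have e : (U₁ * U₁ᵀ) *ᵥ B = U₁ *ᵥ (U₁ᵀ *ᵥ B) := by rw [mulVec_mulVec]
    rw [sub_mulVec, one_mulVec, Pi.sub_apply, e]
    simp [Matrix.mulVec, dotProduct]
  field_simp [h1]
  rw [h1]; ring

theorem zha_simon_rank_one_update {n d : ℕ}
    (A : Matrix (Fin n) (Fin n) ℝ)
    (U₁ : Matrix (Fin n) (Fin d) ℝ) (hU : U₁ᵀ * U₁ = 1)
    (S₁ : Matrix (Fin d) (Fin d) ℝ)
    (V₁ : Matrix (Fin n) (Fin d) ℝ) (hV : V₁ᵀ * V₁ = 1)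
    (hA : A = U₁ * S₁ * V₁ᵀ)
    (B C : Fin n → ℝ)
    (hB : (1 - U₁ * U₁ᵀ).mulVec B ≠ 0)
    (hC : (1 - V₁ * V₁ᵀ).mulVec C ≠ 0) :
    let WB := U₁ᵀ.mulVec B
    let WC := V₁ᵀ.mulVec C
    let RB := _root_.enorm ((1 - U₁ * U₁ᵀ).mulVec B)
    let RC := _root_.enorm ((1 - V₁ * V₁ᵀ).mulVec C)
    let QB := RB⁻¹ • (1 - U₁ * U₁ᵀ).mulVec B
    let QC := RC⁻¹ • (1 - V₁ * V₁ᵀ).mulVec C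
    -- `[W_B; R_B]` and `[W_C; R_C]` as `(d+1)`-vectors
    let wB : Fin (d + 1) → ℝ := fun i => if h : (i : ℕ) < d then WB ⟨i, h⟩ else RB
    let wC : Fin (d + 1) → ℝ := fun i => if h : (i : ℕ) < d then WC ⟨i, h⟩ else RC
    -- `diag(Σ₁, 0)`
    let S₁pad : Matrix (Fin (d + 1)) (Fin (d + 1)) ℝ :=
      Matrix.of fun i j =>
        if hi : (i : ℕ) < d then (if hj : (j : ℕ) < d then S₁ ⟨i, hi⟩ ⟨j, hj⟩ else 0) else 0
    A + Matrix.of (fun i j => B i * C j) =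
      appendCol U₁ QB * (S₁pad + Matrix.of fun i j => wB i * wC j) *
        (appendCol V₁ QC)ᵀ := by
  intro WB WC RB RC QB QC wB wC S₁pad
  have hBdec := decomp U₁ B hB
  have hCdec := decomp V₁ C hC
  ext i j
  simp only [Matrix.add_apply, Matrix.mul_apply, Matrix.transpose_apply, Matrix.of_apply,
    hA, Matrix.mul_apply]
  -- expand sums over Fin (d+1)
  simp only [Fin.sum_univ_castSucc, appendCol, Matrix.of_apply, Fin.coe_castSucc,
    Fin.is_lt, dite_true, Fin.val_last, lt_irrefl, dite_false, Fin.eta,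
    wB, wC, S₁pad]
  simp only [Fin.coe_castSucc, Fin.is_lt, dite_true, Fin.val_last, lt_irrefl,
    dite_false, Fin.eta, Matrix.of_apply, zero_add, add_zero, zero_mul, mul_zero]
  have hBi : (∑ k, U₁ i k * WB k) + QB i * RB = B i := by
    simpa [QB, WB, RB, Pi.smul_apply, smul_eq_mul] using hBdec i
  have hCj : (∑ k, V₁ j k * WC k) + QC j * RC = C j := by
    simpa [QC, WC, RC, Pi.smul_apply, smul_eq_mul] using hCdec j
  rw [← hBi, ← hCj]
  simp only [add_mul, mul_add, Finset.sum_add_distrib, Finset.sum_mul, Finset.mul_sum]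
  simp only [mul_comm, mul_left_comm, mul_assoc]
  ring
end
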